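/- Each single step of the distribution law rewriting preserves strong bisimilarity: if P ⇝ P' then P ∼ P'. Consequently, every process is bisimilar to its normal form. -/
import Mathlib


/-- CCS visible actions: a name `a` or a coname `ā`. -/
inductive Act where
  | inp : ℕ → Act
  | out : ℕ → Act
deriving DecidableEq

/-- The coaction. -/
def Act.co : Act → Act
  | .inp a => .out a
  | .out a => .inp a

/-- MicroCCS processes: nil, prefix, parallel composition. -/
inductive Proc where
  | nil : Proc
  | pre : Act → Proc → Proc
  | par : Proc → Proc → Proc
deriving DecidableEq

/-- Transition labels: a visible action or τ. -/
inductive Lab where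
  | act : Act → Lab
  | tau : Lab
deriving DecidableEq

/-- The standard CCS labelled transition system on microCCS. -/
inductive Step : Proc → Lab → Proc → Prop where
  | pre (η : Act) (P : Proc) : Step (.pre η P) (.act η) P
  | syn {P P' Q Q' : Proc} {η : Act} :
      Step P (.act η) P' → Step Q (.act η.co) Q' →
      Step (.par P Q) .tau (.par P' Q')
  | parL {P P' : Proc} {μ : Lab} (Q : Proc) :
      Step P μ P' → Step (.par P Q) μ (.par P' Q)
  | parR {Q Q' : Proc} {μ : Lab} (P : Proc) :
      Step Q μ Q' → Step (.par P Q) μ (.par P Q')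

/-- A (symmetric) bisimulation. -/
def IsBisim (R : Proc → Proc → Prop) : Prop :=
  (∀ P Q, R P Q → R Q P) ∧
  ∀ P Q μ P', R P Q → Step P μ P' → ∃ Q', Step Q μ Q' ∧ R P' Q'

/-- Strong bisimilarity: the union of all bisimulations. -/
def Bisim (P Q : Proc) : Prop := ∃ R, IsBisim R ∧ R P Q

/-- The size of a process: its number of prefixes. -/
def Proc.size : Proc → ℕ
  | .nil => 0
  | .pre _ P => 1 + P.size
  | .par P Q => P.size + Q.size

/-- Structural congruence: abelian monoid laws for parallel composition. -/
inductive SC : Proc → Proc → Prop where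
  | refl (P) : SC P P
  | symm : SC P Q → SC Q P
  | trans : SC P Q → SC Q R → SC P R
  | comm (P Q) : SC (.par P Q) (.par Q P)
  | assoc (P Q R) : SC (.par P (.par Q R)) (.par (.par P Q) R)
  | unit (P) : SC (.par P .nil) P
  | pre (η) : SC P Q → SC (.pre η P) (.pre η Q)
  | par : SC P P' → SC Q Q' → SC (.par P Q) (.par P' Q')

/-- `pow P k` is the k-fold parallel composition of `P`. -/
def pow (P : Proc) : ℕ → Proc
  | 0 => .nil
  | n+1 => .par P (pow P n)

/-- One step of rewriting with the distribution law
    `η.(P ‖ (η.P)^k) ⇝ (η.P)^{k+1}` (k ≥ 1), modulo structural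
    congruence, in any context. -/
inductive RW : Proc → Proc → Prop where
  | head {η : Act} {P : Proc} {k : ℕ} (hk : 1 ≤ k) :
      RW (.pre η (.par P (pow (.pre η P) k))) (pow (.pre η P) (k+1))
  | pre (η) : RW P P' → RW (.pre η P) (.pre η P')
  | parL (Q) : RW P P' → RW (.par P Q) (.par P' Q)
  | parR (P) : RW Q Q' → RW (.par P Q) (.par P Q')
  | congr : SC P P₁ → RW P₁ P₂ → SC P₂ P' → RW P P'

/-- Reflexive-transitive closure of the distribution rewriting. -/
def Rws : Proc → Proc → Prop := Relation.ReflTransGen RW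

/-- Normal forms for the distribution rewriting. -/
def NF (P : Proc) : Prop := ¬ ∃ P', RW P P'

/-- Prime processes. -/
def IsPrime (P : Proc) : Prop :=
  ¬ Bisim P .nil ∧ ∀ Q R, Bisim P (.par Q R) → Bisim Q .nil ∨ Bisim R .nil

lemma Act.co_co (η : Act) : η.co.co = η := by cases η <;> rfl

lemma Act.co_ne (η : Act) : η.co ≠ η := by cases η <;> simp [Act.co]

/-- `Q` can match every transition of `P` up to `SC`. -/
def Progress (P Q : Proc) : Prop :=
  ∀ μ P', Step P μ P' → ∃ Q', Step Q μ Q' ∧ SC P' Q'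

lemma sc_progress : ∀ {P Q : Proc}, SC P Q → Progress P Q ∧ Progress Q P := by
  intro P Q h
  induction h with
  | refl P => exact ⟨fun μ P' s => ⟨P', s, .refl _⟩, fun μ P' s => ⟨P', s, .refl _⟩⟩
  | symm _ ih => exact ⟨ih.2, ih.1⟩
  | trans _ _ ih1 ih2 =>
    refine ⟨fun μ P' s => ?_, fun μ P' s => ?_⟩
    · obtain ⟨Q', s1, c1⟩ := ih1.1 μ P' s
      obtain ⟨R', s2, c2⟩ := ih2.1 μ Q' s1
      exact ⟨R', s2, c1.trans c2⟩
    · obtain ⟨Q', s1, c1⟩ := ih2.2 μ P' s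
      obtain ⟨R', s2, c2⟩ := ih1.2 μ Q' s1
      exact ⟨R', s2, c1.trans c2⟩
  | comm P Q =>
    constructor <;>
    · intro μ X s
      cases s with
      | @syn _ _ _ _ η a b =>
        exact ⟨_, Step.syn (η := η.co) b (by rw [Act.co_co]; exact a), SC.comm _ _⟩
      | parL _ s => exact ⟨_, .parR _ s, .comm _ _⟩
      | parR _ s => exact ⟨_, .parL _ s, .comm _ _⟩
  | assoc P Q R =>
    constructor
    · intro μ X s
      cases s with
      | parL _ s => exact ⟨_, .parL R (.parL Q s), .assoc _ _ _⟩
      | parR _ s =>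
        cases s with
        | parL _ s => exact ⟨_, .parL R (.parR P s), .assoc _ _ _⟩
        | parR _ s => exact ⟨_, .parR (.par P Q) s, .assoc _ _ _⟩
        | syn a b => exact ⟨_, .syn (.parR P a) b, .assoc _ _ _⟩
      | syn a s =>
        cases s with
        | parL _ b => exact ⟨_, .parL R (.syn a b), .assoc _ _ _⟩
        | parR _ b => exact ⟨_, .syn (.parL Q a) b, .assoc _ _ _⟩
    · intro μ X s
      cases s with
      | parL _ s =>
        cases s with
        | parL _ s => exact ⟨_, .parL _ s, .symm (.assoc _ _ _)⟩
        | parR _ s => exact ⟨_, .parR P (.parL R s), .symm (.assoc _ _ _)⟩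
        | syn a b => exact ⟨_, .syn a (.parL R b), .symm (.assoc _ _ _)⟩
      | parR _ s => exact ⟨_, .parR P (.parR Q s), .symm (.assoc _ _ _)⟩
      | syn a b =>
        cases a with
        | parL _ a => exact ⟨_, .syn a (.parR Q b), .symm (.assoc _ _ _)⟩
        | parR _ a => exact ⟨_, .parR P (.syn a b), .symm (.assoc _ _ _)⟩
  | unit P =>
    constructor
    · intro μ X s
      cases s with
      | parL _ s => exact ⟨_, s, .unit _⟩
      | parR _ s => cases s
      | syn a b => cases b
    · intro μ X s
      exact ⟨_, .parL _ s, .symm (.unit _)⟩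
  | pre η h ih =>
    constructor <;>
    · intro μ X s
      cases s
      exact ⟨_, .pre _ _, by first | exact h | exact h.symm⟩
  | par h1 h2 ih1 ih2 =>
    constructor
    · intro μ X s
      cases s with
      | parL _ s =>
        obtain ⟨B, s', c⟩ := ih1.1 _ _ s
        exact ⟨_, .parL _ s', .par c h2⟩
      | parR _ s =>
        obtain ⟨B, s', c⟩ := ih2.1 _ _ s
        exact ⟨_, .parR _ s', .par h1 c⟩
      | syn a b =>
        obtain ⟨B, s1, c1⟩ := ih1.1 _ _ a
        obtain ⟨D, s2, c2⟩ := ih2.1 _ _ b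
        exact ⟨_, .syn s1 s2, .par c1 c2⟩
    · intro μ X s
      cases s with
      | parL _ s =>
        obtain ⟨B, s', c⟩ := ih1.2 _ _ s
        exact ⟨_, .parL _ s', .par c h2.symm⟩
      | parR _ s =>
        obtain ⟨B, s', c⟩ := ih2.2 _ _ s
        exact ⟨_, .parR _ s', .par h1.symm c⟩
      | syn a b =>
        obtain ⟨B, s1, c1⟩ := ih1.2 _ _ a
        obtain ⟨D, s2, c2⟩ := ih2.2 _ _ b
        exact ⟨_, .syn s1 s2, .par c1 c2⟩

lemma sc_bisim {P Q : Proc} (h : SC P Q) : Bisim P Q :=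
  ⟨SC, ⟨fun _ _ => SC.symm, fun _ _ μ P' hR hs => (sc_progress hR).1 μ P' hs⟩, h⟩

lemma bisim_refl (P : Proc) : Bisim P P := sc_bisim (.refl P)

lemma bisim_symm {P Q : Proc} : Bisim P Q → Bisim Q P :=
  fun ⟨R, hR, h⟩ => ⟨R, hR, hR.1 _ _ h⟩

lemma bisim_trans {P Q R : Proc} : Bisim P Q → Bisim Q R → Bisim P R := by
  rintro ⟨R1, ⟨sy1, st1⟩, h1⟩ ⟨R2, ⟨sy2, st2⟩, h2⟩
  refine ⟨fun X Z => (∃ Y, R1 X Y ∧ R2 Y Z) ∨ (∃ Y, R2 X Y ∧ R1 Y Z),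
    ⟨?_, ?_⟩, Or.inl ⟨Q, h1, h2⟩⟩
  · rintro X Z (⟨Y, a, b⟩ | ⟨Y, a, b⟩)
    · exact Or.inr ⟨Y, sy2 _ _ b, sy1 _ _ a⟩
    · exact Or.inl ⟨Y, sy1 _ _ b, sy2 _ _ a⟩
  · rintro X Z μ X' (⟨Y, a, b⟩ | ⟨Y, a, b⟩) s
    · obtain ⟨Y', sY, a'⟩ := st1 _ _ _ _ a s
      obtain ⟨Z', sZ, b'⟩ := st2 _ _ _ _ b sY
      exact ⟨Z', sZ, Or.inl ⟨Y', a', b'⟩⟩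
    · obtain ⟨Y', sY, a'⟩ := st2 _ _ _ _ a s
      obtain ⟨Z', sZ, b'⟩ := st1 _ _ _ _ b sY
      exact ⟨Z', sZ, Or.inr ⟨Y', a', b'⟩⟩

lemma bisim_pre {η : Act} {P Q : Proc} (h : Bisim P Q) :
    Bisim (.pre η P) (.pre η Q) := by
  obtain ⟨R, ⟨sy, st⟩, hPQ⟩ := h
  refine ⟨fun X Y => R X Y ∨ (X = .pre η P ∧ Y = .pre η Q) ∨
      (X = .pre η Q ∧ Y = .pre η P), ⟨?_, ?_⟩, Or.inr (Or.inl ⟨rfl, rfl⟩)⟩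
  · rintro X Y (h | ⟨rfl, rfl⟩ | ⟨rfl, rfl⟩)
    · exact Or.inl (sy _ _ h)
    · exact Or.inr (Or.inr ⟨rfl, rfl⟩)
    · exact Or.inr (Or.inl ⟨rfl, rfl⟩)
  · rintro X Y μ X' (h | ⟨rfl, rfl⟩ | ⟨rfl, rfl⟩) s
    · obtain ⟨Y', sY, h'⟩ := st _ _ _ _ h s
      exact ⟨Y', sY, Or.inl h'⟩
    · cases s; exact ⟨Q, .pre η Q, Or.inl hPQ⟩
    · cases s; exact ⟨P, .pre η P, Or.inl (sy _ _ hPQ)⟩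

lemma bisim_par {P Q P' Q' : Proc} (h1 : Bisim P Q) (h2 : Bisim P' Q') :
    Bisim (.par P P') (.par Q Q') := by
  obtain ⟨R1, ⟨sy1, st1⟩, hPQ⟩ := h1
  obtain ⟨R2, ⟨sy2, st2⟩, hPQ'⟩ := h2
  refine ⟨fun X Y => ∃ A B C D, X = .par A C ∧ Y = .par B D ∧ R1 A B ∧ R2 C D,
    ⟨?_, ?_⟩, P, Q, P', Q', rfl, rfl, hPQ, hPQ'⟩
  · rintro X Y ⟨A, B, C, D, rfl, rfl, a, b⟩
    exact ⟨B, A, D, C, rfl, rfl, sy1 _ _ a, sy2 _ _ b⟩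
  · rintro X Y μ X' ⟨A, B, C, D, rfl, rfl, a, b⟩ s
    cases s with
    | parL _ s =>
      obtain ⟨B', sB, a'⟩ := st1 _ _ _ _ a s
      exact ⟨_, .parL _ sB, _, B', _, D, rfl, rfl, a', b⟩
    | parR _ s =>
      obtain ⟨D', sD, b'⟩ := st2 _ _ _ _ b s
      exact ⟨_, .parR _ sD, _, B, _, D', rfl, rfl, a, b'⟩
    | syn sa sb =>
      obtain ⟨B', sB, a'⟩ := st1 _ _ _ _ a sa
      obtain ⟨D', sD, b'⟩ := st2 _ _ _ _ b sb
      exact ⟨_, .syn sB sD, _, B', _, D', rfl, rfl, a', b'⟩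

/-- Every transition of `(η.P)^n` is an `η`-transition to `P ‖ (η.P)^{n-1}`
up to structural congruence. -/
lemma pow_step : ∀ (n : ℕ) {η : Act} {P : Proc} {μ : Lab} {X : Proc},
    Step (pow (.pre η P) n) μ X →
    μ = .act η ∧ SC X (.par P (pow (.pre η P) (n - 1))) := by
  intro n
  induction n with
  | zero => intro η P μ X s; cases s
  | succ n ih =>
    intro η P μ X s
    cases s with
    | parL _ s => cases s; exact ⟨rfl, .refl _⟩
    | parR _ s =>
      obtain ⟨rfl, hsc⟩ := ih s
      refine ⟨rfl, ?_⟩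
      cases n with
      | zero => cases s
      | succ m =>
        exact (SC.par (.refl _) hsc).trans
          ((SC.assoc _ _ _).trans (((SC.comm _ _).par (SC.refl _)).trans
            (SC.assoc _ _ _).symm))
    | syn a b =>
      cases a
      obtain ⟨h, _⟩ := ih b
      exact absurd (by injection h) (Act.co_ne _)

/-- each distribution rewrite step preserves strong bisimilarity,
    and consequently every process is bisimilar to its normal form. -/
theorem rw_preserves_bisim :
    (∀ P P' : Proc, RW P P' → Bisim P P') ∧
    (∀ P A : Proc, Rws P A → NF A → Bisim P A) := by
  have head_bisim : ∀ (η : Act) (P : Proc) (k : ℕ),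
      Bisim (.pre η (.par P (pow (.pre η P) k))) (pow (.pre η P) (k+1)) := by
    intro η P k
    refine ⟨fun X Y => SC X Y ∨
        (X = .pre η (.par P (pow (.pre η P) k)) ∧ Y = pow (.pre η P) (k+1)) ∨
        (X = pow (.pre η P) (k+1) ∧ Y = .pre η (.par P (pow (.pre η P) k))),
      ⟨?_, ?_⟩, Or.inr (Or.inl ⟨rfl, rfl⟩)⟩
    · rintro X Y (h | ⟨rfl, rfl⟩ | ⟨rfl, rfl⟩)
      · exact Or.inl h.symm
      · exact Or.inr (Or.inr ⟨rfl, rfl⟩)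
      · exact Or.inr (Or.inl ⟨rfl, rfl⟩)
    · rintro X Y μ X' (h | ⟨rfl, rfl⟩ | ⟨rfl, rfl⟩) s
      · obtain ⟨Y', sY, c⟩ := (sc_progress h).1 _ _ s
        exact ⟨Y', sY, Or.inl c⟩
      · cases s
        exact ⟨.par P (pow (.pre η P) k), .parL _ (.pre η P), Or.inl (.refl _)⟩
      · obtain ⟨rfl, c⟩ := pow_step (k+1) s
        exact ⟨.par P (pow (.pre η P) k), .pre η _, Or.inl c⟩
  have h1 : ∀ P P' : Proc, RW P P' → Bisim P P' := by
    intro P P' h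
    induction h with
    | @head η Q k _ => exact head_bisim η Q k
    | pre η _ ih => exact bisim_pre ih
    | parL Q _ ih => exact bisim_par ih (bisim_refl Q)
    | parR P _ ih => exact bisim_par (bisim_refl P) ih
    | congr s1 _ s2 ih => exact bisim_trans (sc_bisim s1) (bisim_trans ih (sc_bisim s2))
  have h2 : ∀ P A : Proc, Rws P A → Bisim P A := by
    intro P A h
    induction h with
    | refl => exact bisim_refl P
    | tail _ hstep ih => exact bisim_trans ih (h1 _ _ hstep)
  exact ⟨h1, fun P A h _ => h2 P A h⟩
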